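/- arXiv:2203.03897 — 3 statements merged into one kernel-verified Lean document; each statement's English description precedes it below -/
import Mathlib

section
/- The modified Bessel function ratio A(κ) = I₁(κ)/I₀(κ) tends to 1 as κ → ∞. -/
open Real Filter

noncomputable def besselI0 (κ : ℝ) : ℝ :=
  (1 / Real.pi) * ∫ t in (0:ℝ)..Real.pi, Real.exp (κ * Real.cos t)

noncomputable def besselI1 (κ : ℝ) : ℝ :=
  (1 / Real.pi) * ∫ t in (0:ℝ)..Real.pi, Real.exp (κ * Real.cos t) * Real.cos t

/-!
Write `1 - I₁/I₀` as `∫₀^π e^{κ cos t} (1 - cos t) dt / ∫₀^π e^{κ cos t} dt`.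
Where `cos t ≥ 0` one has `1 - cos t ≤ sin t`, and `sin t · e^{κ cos t}` has an explicit
primitive, so the numerator is at most `e^κ/κ + 2π`. Restricting the denominator to
`[0, κ^{-1/2}]`, where `κ cos t ≥ κ - 1/2`, bounds it below by `e^{κ - 1/2}/√κ`.
Hence `1 - I₁/I₀ = O(κ^{-1/2})`.
-/

open Topology intervalIntegral

theorem integral_sin_mul_exp_mul_cos {κ : ℝ} (hκ : κ ≠ 0) :
    ∫ t in (0:ℝ)..π, sin t * exp (κ * cos t) = (exp κ - exp (-κ)) / κ := by
  have hderiv (t : ℝ) :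
      HasDerivAt (fun t => -exp (κ * cos t) / κ) (sin t * exp (κ * cos t)) t := by
    refine (((hasDerivAt_cos t).const_mul κ).exp.neg.div_const κ).congr_deriv ?_
    field_simp
  rw [integral_eq_sub_of_hasDerivAt (fun t _ => hderiv t)
    (Continuous.intervalIntegrable (by fun_prop) _ _)]
  simp only [cos_pi, cos_zero, mul_one, mul_neg]
  ring

theorem mul_exp_mul_cos_le_integral {κ δ : ℝ} (hκ : 0 ≤ κ) (hδ : 0 ≤ δ) (hδπ : δ ≤ π) :
    δ * exp (κ * cos δ) ≤ ∫ t in (0:ℝ)..π, exp (κ * cos t) :=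
  calc δ * exp (κ * cos δ) = ∫ _ in (0:ℝ)..δ, exp (κ * cos δ) := by simp
    _ ≤ ∫ t in (0:ℝ)..δ, exp (κ * cos t) := by
      refine integral_mono_on hδ (by simp) (Continuous.intervalIntegrable (by fun_prop) _ _)
        fun t ht => ?_
      gcongr
      exact cos_le_cos_of_nonneg_of_le_pi ht.1 hδπ ht.2
    _ ≤ ∫ t in (0:ℝ)..π, exp (κ * cos t) :=
      integral_mono_interval le_rfl hδ hδπ (.of_forall fun t => (exp_pos _).le)
        (Continuous.intervalIntegrable (by fun_prop) _ _)

theorem exp_sub_half_div_sqrt_le_integral {κ : ℝ} (hκ : 1 ≤ κ) :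
    exp (κ - 1 / 2) / √κ ≤ ∫ t in (0:ℝ)..π, exp (κ * cos t) := by
  have hsqrt : 1 ≤ √κ := one_le_sqrt.mpr hκ
  have hδπ : (√κ)⁻¹ ≤ π := (inv_le_one_of_one_le₀ hsqrt).trans (by linarith [pi_gt_three])
  refine le_trans ?_ (mul_exp_mul_cos_le_integral (by linarith) (by positivity) hδπ)
  rw [div_eq_inv_mul]
  gcongr
  have hcos := one_sub_sq_div_two_le_cos (x := (√κ)⁻¹)
  rw [inv_pow, sq_sqrt (by linarith)] at hcos
  calc κ - 1 / 2 = κ * (1 - κ⁻¹ / 2) := by field_simp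
    _ ≤ κ * cos (√κ)⁻¹ := by gcongr

theorem exp_mul_cos_mul_one_sub_cos_le {κ t : ℝ} (hκ : 0 ≤ κ) (ht₀ : 0 ≤ t) (htπ : t ≤ π) :
    exp (κ * cos t) * (1 - cos t) ≤ sin t * exp (κ * cos t) + 2 := by
  have hsin : 0 ≤ sin t := sin_nonneg_of_nonneg_of_le_pi ht₀ htπ
  have hexp := exp_pos (κ * cos t)
  rcases le_total 0 (cos t) with hcos | hcos
  · have : 1 - cos t ≤ sin t := by nlinarith [sin_sq_add_cos_sq t]
    nlinarith
  · have : exp (κ * cos t) ≤ 1 := exp_le_one_iff.mpr (mul_nonpos_of_nonneg_of_nonpos hκ hcos)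
    nlinarith [neg_one_le_cos t]

theorem integral_exp_mul_cos_mul_one_sub_cos_le {κ : ℝ} (hκ : 0 < κ) :
    ∫ t in (0:ℝ)..π, exp (κ * cos t) * (1 - cos t) ≤ exp κ / κ + 2 * π :=
  calc ∫ t in (0:ℝ)..π, exp (κ * cos t) * (1 - cos t)
      ≤ ∫ t in (0:ℝ)..π, (sin t * exp (κ * cos t) + 2) :=
        integral_mono_on pi_pos.le (Continuous.intervalIntegrable (by fun_prop) _ _)
          (Continuous.intervalIntegrable (by fun_prop) _ _)
          fun t ht => exp_mul_cos_mul_one_sub_cos_le hκ.le ht.1 ht.2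
    _ = (exp κ - exp (-κ)) / κ + 2 * π := by
        rw [integral_add (Continuous.intervalIntegrable (by fun_prop) _ _) (by simp),
          integral_sin_mul_exp_mul_cos hκ.ne']
        simp [mul_comm]
    _ ≤ exp κ / κ + 2 * π := by gcongr; linarith [exp_pos (-κ)]

theorem one_sub_besselRatio_eq (κ : ℝ) :
    1 - besselI1 κ / besselI0 κ =
      (∫ t in (0:ℝ)..π, exp (κ * cos t) * (1 - cos t)) / ∫ t in (0:ℝ)..π, exp (κ * cos t) := by
  have hpos : 0 < ∫ t in (0:ℝ)..π, exp (κ * cos t) :=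
    intervalIntegral_pos_of_pos (Continuous.intervalIntegrable (by fun_prop) _ _)
      (fun t => exp_pos _) pi_pos
  have hsplit : ∫ t in (0:ℝ)..π, exp (κ * cos t) * (1 - cos t) =
      (∫ t in (0:ℝ)..π, exp (κ * cos t)) - ∫ t in (0:ℝ)..π, exp (κ * cos t) * cos t := by
    rw [← integral_sub (Continuous.intervalIntegrable (by fun_prop) _ _)
      (Continuous.intervalIntegrable (by fun_prop) _ _)]
    simp only [mul_one_sub]
  rw [besselI0, besselI1, mul_div_mul_left _ _ (by positivity), hsplit, sub_div,
    div_self hpos.ne']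

theorem one_sub_besselRatio_nonneg (κ : ℝ) : 0 ≤ 1 - besselI1 κ / besselI0 κ := by
  rw [one_sub_besselRatio_eq]
  refine div_nonneg (integral_nonneg pi_pos.le fun t _ => ?_)
    (integral_nonneg pi_pos.le fun t _ => (exp_pos _).le)
  exact mul_nonneg (exp_pos _).le (sub_nonneg.mpr (cos_le_one t))

theorem one_sub_besselRatio_le {κ : ℝ} (hκ : 1 ≤ κ) :
    1 - besselI1 κ / besselI0 κ ≤ exp (1 / 2) * ((√κ)⁻¹ + 2 * π * (√κ * exp (-κ))) := by
  have hκ₀ : 0 < κ := by linarith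
  rw [one_sub_besselRatio_eq]
  calc _ ≤ (exp κ / κ + 2 * π) / (exp (κ - 1 / 2) / √κ) :=
        div_le_div₀ (by positivity) (integral_exp_mul_cos_mul_one_sub_cos_le hκ₀)
          (by positivity) (exp_sub_half_div_sqrt_le_integral hκ)
    _ = exp (1 / 2) * ((√κ)⁻¹ + 2 * π * (√κ * exp (-κ))) := by
        rw [exp_sub, exp_neg]
        field_simp
        rw [sq_sqrt hκ₀.le]
        ring

theorem tendsto_exp_half_mul_inv_sqrt_add_sqrt_mul_exp_neg :
    Tendsto (fun κ : ℝ => exp (1 / 2) * ((√κ)⁻¹ + 2 * π * (√κ * exp (-κ)))) atTop (𝓝 0) := by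
  have hinv : Tendsto (fun κ : ℝ => (√κ)⁻¹) atTop (𝓝 0) :=
    tendsto_inv_atTop_zero.comp tendsto_sqrt_atTop
  have hdecay : Tendsto (fun κ : ℝ => √κ * exp (-κ)) atTop (𝓝 0) := by
    refine (tendsto_rpow_mul_exp_neg_mul_atTop_nhds_zero (1 / 2) 1 one_pos).congr fun κ => ?_
    rw [sqrt_eq_rpow, neg_one_mul]
  simpa using (hinv.add (hdecay.const_mul (2 * π))).const_mul (exp (1 / 2))

theorem besselRatio_tendsto_one :
    Tendsto (fun κ : ℝ => besselI1 κ / besselI0 κ) atTop (nhds 1) := by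
  have hdefect : Tendsto (fun κ => 1 - besselI1 κ / besselI0 κ) atTop (𝓝 0) :=
    squeeze_zero' (.of_forall one_sub_besselRatio_nonneg)
      ((eventually_ge_atTop 1).mono fun _ => one_sub_besselRatio_le)
      tendsto_exp_half_mul_inv_sqrt_add_sqrt_mul_exp_neg
  simpa using (tendsto_const_nhds (x := (1 : ℝ))).sub hdefect
end

section
/- For real numbers s₁, …, s_M and a fixed index i, the quantity τ · log(1 + Σ_{j ≠ i} exp((s_j − s_i)/τ)) converges to max(max_{j≠i} s_j − s_i, 0) as τ → 0⁺. -/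
open Real Filter

theorem triplet_limit_of_contrastive (M : ℕ) (hM : 2 ≤ M) (s : Fin M → ℝ)
    (i : Fin M) (hne : (Finset.univ.erase i).Nonempty) :
    Tendsto (fun τ : ℝ =>
        τ * Real.log (1 + ∑ j ∈ Finset.univ.erase i, Real.exp ((s j - s i) / τ)))
      (nhdsWithin 0 (Set.Ioi 0))
      (nhds (max ((Finset.univ.erase i).sup' hne s - s i) 0)) := by
  set T := Finset.univ.erase i with hT
  set A := max ((T.sup' hne s) - s i) 0 with hA
  have hA0 : 0 ≤ A := le_max_right _ _
  obtain ⟨k, hk, hks⟩ := Finset.exists_mem_eq_sup' hne s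
  set C : ℝ := (T.card : ℝ) with hC
  have hC0 : (0:ℝ) ≤ C := by positivity
  have hC1 : (0:ℝ) < C + 1 := by linarith
  have key : ∀ τ : ℝ, τ ∈ Set.Ioi (0:ℝ) →
      A ≤ τ * Real.log (1 + ∑ j ∈ T, Real.exp ((s j - s i) / τ)) ∧
      τ * Real.log (1 + ∑ j ∈ T, Real.exp ((s j - s i) / τ)) ≤ A + τ * Real.log (C + 1) := by
    intro τ hτ
    have hτ0 : 0 < τ := hτ
    have hsum0 : 0 ≤ ∑ j ∈ T, Real.exp ((s j - s i) / τ) :=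
      Finset.sum_nonneg fun j _ => (Real.exp_pos _).le
    have hpos : 0 < 1 + ∑ j ∈ T, Real.exp ((s j - s i) / τ) := by linarith
    constructor
    · -- lower bound
      rw [← div_le_iff₀' hτ0, Real.le_log_iff_exp_le hpos]
      rcases le_or_gt (T.sup' hne s - s i) 0 with h | h
      · have : A = 0 := max_eq_right h
        rw [this]
        simpa using hsum0
      · have : A = s k - s i := by rw [hA, max_eq_left h.le, hks]
        rw [this]
        have hle : Real.exp ((s k - s i) / τ) ≤ ∑ j ∈ T, Real.exp ((s j - s i) / τ) :=
          Finset.single_le_sum (f := fun j => Real.exp ((s j - s i) / τ)) (fun j _ => (Real.exp_pos _).le) hk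
        linarith
    · -- upper bound
      have hterm : ∀ j ∈ T, Real.exp ((s j - s i) / τ) ≤ Real.exp (A / τ) := by
        intro j hj
        apply Real.exp_le_exp.mpr
        have h1 : s j ≤ T.sup' hne s := Finset.le_sup' s hj
        have h2 : s j - s i ≤ A := le_trans (by linarith) (le_max_left _ _)
        gcongr
      have hsum : ∑ j ∈ T, Real.exp ((s j - s i) / τ) ≤ C * Real.exp (A / τ) := by
        calc ∑ j ∈ T, Real.exp ((s j - s i) / τ) ≤ ∑ _j ∈ T, Real.exp (A / τ) :=
              Finset.sum_le_sum hterm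
          _ = C * Real.exp (A / τ) := by rw [Finset.sum_const, nsmul_eq_mul]
      have hone : (1:ℝ) ≤ Real.exp (A / τ) := by
        rw [← Real.exp_zero]
        exact Real.exp_le_exp.mpr (by positivity)
      have hle : 1 + ∑ j ∈ T, Real.exp ((s j - s i) / τ) ≤ (C + 1) * Real.exp (A / τ) := by
        nlinarith
      have hlog : Real.log (1 + ∑ j ∈ T, Real.exp ((s j - s i) / τ)) ≤
          Real.log (C + 1) + A / τ := by
        calc Real.log (1 + ∑ j ∈ T, Real.exp ((s j - s i) / τ))
            ≤ Real.log ((C + 1) * Real.exp (A / τ)) := Real.log_le_log hpos hle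
          _ = Real.log (C + 1) + A / τ := by
              rw [Real.log_mul (ne_of_gt hC1) (Real.exp_pos _).ne', Real.log_exp]
      have := mul_le_mul_of_nonneg_left hlog hτ0.le
      calc τ * Real.log (1 + ∑ j ∈ T, Real.exp ((s j - s i) / τ))
          ≤ τ * (Real.log (C + 1) + A / τ) := this
        _ = A + τ * Real.log (C + 1) := by field_simp; ring
  have hupper : Tendsto (fun τ : ℝ => A + τ * Real.log (C + 1))
      (nhdsWithin 0 (Set.Ioi 0)) (nhds A) := by
    have : Tendsto (fun τ : ℝ => A + τ * Real.log (C + 1)) (nhds 0) (nhds (A + 0 * Real.log (C + 1))) := by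
      exact (tendsto_const_nhds.add ((continuous_id.mul continuous_const).tendsto 0))
    simpa using this.mono_left nhdsWithin_le_nhds
  refine tendsto_of_tendsto_of_tendsto_of_le_of_le' tendsto_const_nhds hupper ?_ ?_
  · filter_upwards [self_mem_nhdsWithin] with τ hτ using (key τ hτ).1
  · filter_upwards [self_mem_nhdsWithin] with τ hτ using (key τ hτ).2
end

section
/- If the top-1 hardest negative similarity exceeds the positive similarity for every i (i.e., max_{j≠i}⟨I_i, T_j⟩ > ⟨I_i, T_i⟩), then the zero-temperature limit of the contrastive loss C(I,T) = (1/M)Σ_i −log(exp(⟨I_i,T_i⟩/τ)/Σ_j exp(⟨I_i,T_j⟩/τ)), scaled by τ, equals the negative relative alignment (1/M)Σ_i (max_{j≠i}⟨I_i,T_j⟩ − ⟨I_i,T_i⟩). -/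
/-!
As `τ → 0⁺`, the log-sum-exp `τ log ∑ⱼ exp (aⱼ / τ)` is squeezed between `maxⱼ aⱼ` and
`maxⱼ aⱼ + τ log M`, so it tends to the maximum. Each term of `τ C(I, T)` is this quantity minus
the positive similarity, and under the hardness assumption the maximum over all `j` is attained
off the diagonal.
-/

open Real Filter Topology Finset

section LogSumExp

variable {ι : Type*} (s : Finset ι) (a : ι → ℝ)

theorem Finset.sup'_le_mul_log_sum_exp_div (hs : s.Nonempty) {τ : ℝ} (hτ : 0 < τ) :
    s.sup' hs a ≤ τ * log (∑ j ∈ s, exp (a j / τ)) := by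
  obtain ⟨j, hj, hja⟩ := s.exists_mem_eq_sup' hs a
  have hpos : 0 < ∑ k ∈ s, exp (a k / τ) := sum_pos (fun k _ => exp_pos _) hs
  rw [hja, ← div_le_iff₀' hτ, le_log_iff_exp_le hpos]
  exact single_le_sum (f := fun k => exp (a k / τ)) (fun k _ => (exp_pos _).le) hj

theorem Finset.mul_log_sum_exp_div_le (hs : s.Nonempty) {τ : ℝ} (hτ : 0 < τ) :
    τ * log (∑ j ∈ s, exp (a j / τ)) ≤ s.sup' hs a + τ * log s.card := by
  have hsum : ∑ j ∈ s, exp (a j / τ) ≤ s.card * exp (s.sup' hs a / τ) := by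
    simpa using s.sum_le_card_nsmul _ _ fun j hj =>
      exp_le_exp.2 (div_le_div_of_nonneg_right (s.le_sup' a hj) hτ.le)
  have hcard : (0 : ℝ) < s.card := by exact_mod_cast hs.card_pos
  calc τ * log (∑ j ∈ s, exp (a j / τ))
      ≤ τ * log (s.card * exp (s.sup' hs a / τ)) := by gcongr
    _ = s.sup' hs a + τ * log s.card := by
      rw [log_mul hcard.ne' (exp_ne_zero _), log_exp]
      field_simp
      ring

theorem Finset.tendsto_mul_log_sum_exp_div (hs : s.Nonempty) :
    Tendsto (fun τ => τ * log (∑ j ∈ s, exp (a j / τ))) (𝓝[>] 0) (𝓝 (s.sup' hs a)) := by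
  have hupper : Tendsto (fun τ : ℝ => s.sup' hs a + τ * log s.card) (𝓝[>] 0)
      (𝓝 (s.sup' hs a)) := by
    have hcont : Continuous fun τ : ℝ => s.sup' hs a + τ * log s.card := by fun_prop
    simpa using (hcont.tendsto 0).mono_left nhdsWithin_le_nhds
  refine tendsto_of_tendsto_of_tendsto_of_le_of_le' tendsto_const_nhds hupper ?_ ?_ <;>
    filter_upwards [self_mem_nhdsWithin] with τ hτ
  exacts [s.sup'_le_mul_log_sum_exp_div a hs hτ, s.mul_log_sum_exp_div_le a hs hτ]

end LogSumExp

theorem Finset.sup'_eq_sup'_erase_of_le {ι α : Type*} [SemilatticeSup α] [DecidableEq ι]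
    {s : Finset ι} {i : ι} {a : ι → α} (hi : i ∈ s) (hs : (s.erase i).Nonempty)
    (h : a i ≤ (s.erase i).sup' hs a) :
    s.sup' (hs.mono (s.erase_subset i)) a = (s.erase i).sup' hs a :=
  calc s.sup' _ a = (insert i (s.erase i)).sup' (insert_nonempty i (s.erase i)) a :=
        sup'_congr _ (insert_erase hi).symm fun _ _ => rfl
    _ = (s.erase i).sup' hs a := by rw [sup'_insert (H := hs), sup_of_le_right h]

theorem mul_neg_log_exp_div_div (x : ℝ) {S τ : ℝ} (hS : 0 < S) (hτ : τ ≠ 0) :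
    τ * -log (exp (x / τ) / S) = τ * log S - x := by
  rw [log_div (exp_ne_zero _) hS.ne', log_exp]
  field_simp
  ring

theorem zero_temp_contrastive_eq_neg_alignment_general (M d : ℕ)
    (I T : Fin M → EuclideanSpace ℝ (Fin d))
    (hne : ∀ i : Fin M, (Finset.univ.erase i).Nonempty)
    (hhard : ∀ i : Fin M,
      (inner ℝ (I i) (T i) : ℝ) <
        (Finset.univ.erase i).sup' (hne i) (fun j => (inner ℝ (I i) (T j) : ℝ))) :
    Tendsto (fun τ : ℝ =>
        τ * ((1 / (M : ℝ)) * ∑ i : Fin M,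
          -Real.log (Real.exp ((inner ℝ (I i) (T i) : ℝ) / τ) /
            ∑ j : Fin M, Real.exp ((inner ℝ (I i) (T j) : ℝ) / τ))))
      (nhdsWithin 0 (Set.Ioi 0))
      (nhds ((1 / (M : ℝ)) * ∑ i : Fin M,
        ((Finset.univ.erase i).sup' (hne i) (fun j => (inner ℝ (I i) (T j) : ℝ))
          - (inner ℝ (I i) (T i) : ℝ)))) := by
  have hterm : ∀ i, Tendsto (fun τ => τ * log (∑ j, exp (inner ℝ (I i) (T j) / τ))
      - inner ℝ (I i) (T i)) (𝓝[>] 0)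
      (𝓝 ((univ.erase i).sup' (hne i) (fun j => inner ℝ (I i) (T j)) - inner ℝ (I i) (T i))) := by
    intro i
    rw [← sup'_eq_sup'_erase_of_le (mem_univ i) (hne i) (hhard i).le]
    exact (tendsto_mul_log_sum_exp_div _ _ _).sub_const _
  refine ((tendsto_finsetSum _ fun i _ => hterm i).const_mul (1 / (M : ℝ))).congr' ?_
  filter_upwards [self_mem_nhdsWithin] with τ (hτ : 0 < τ)
  rw [mul_left_comm, mul_sum _ _ τ]
  congr 1
  refine sum_congr rfl fun i _ => ?_
  have hpos : 0 < ∑ j, exp (inner ℝ (I i) (T j) / τ : ℝ) :=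
    sum_pos (fun _ _ => exp_pos _) ⟨i, mem_univ i⟩
  exact (mul_neg_log_exp_div_div _ hpos hτ.ne').symm

theorem zero_temp_contrastive_eq_neg_alignment (M d : ℕ) (hM : 2 ≤ M)
    (I T : Fin M → EuclideanSpace ℝ (Fin d))
    (hI : ∀ i, ‖I i‖ = 1) (hT : ∀ i, ‖T i‖ = 1)
    (hne : ∀ i : Fin M, (Finset.univ.erase i).Nonempty)
    (hhard : ∀ i : Fin M,
      (inner ℝ (I i) (T i) : ℝ) <
        (Finset.univ.erase i).sup' (hne i) (fun j => (inner ℝ (I i) (T j) : ℝ))) :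
    Tendsto (fun τ : ℝ =>
        τ * ((1 / (M : ℝ)) * ∑ i : Fin M,
          -Real.log (Real.exp ((inner ℝ (I i) (T i) : ℝ) / τ) /
            ∑ j : Fin M, Real.exp ((inner ℝ (I i) (T j) : ℝ) / τ))))
      (nhdsWithin 0 (Set.Ioi 0))
      (nhds ((1 / (M : ℝ)) * ∑ i : Fin M,
        ((Finset.univ.erase i).sup' (hne i) (fun j => (inner ℝ (I i) (T j) : ℝ))
          - (inner ℝ (I i) (T i) : ℝ)))) :=
  zero_temp_contrastive_eq_neg_alignment_general M d I T hne hhard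
end
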